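/- arXiv:2002.12432 — 3 statements merged into one kernel-verified Lean document; each statement's English description precedes it below -/
import Mathlib

section
/- Let A, C, Q be finite nonempty index types and let ρ be a density matrix on ℂ^A ⊗ (ℂ^C ⊗ ℂ^Q) that is classical on C, i.e., ρ_{(a,(i,q)),(a',(i',q'))} = 0 whenever i ≠ i'. Then the conditional von Neumann entropy satisfies H(A|B)_ρ = H(ρ) − H(Tr_A ρ) ≥ −log₂ |Q|; equivalently, log₂ |Q| ≥ −H(A|B)_ρ. -/
open Matrix Kronecker BigOperators Finset ComplexOrder

noncomputable section

/-- A density matrix: a positive semidefinite matrix with unit trace. -/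
def IsDensityMatrix {I : Type*} [Fintype I] (ρ : Matrix I I ℂ) : Prop :=
  ρ.PosSemidef ∧ ρ.trace = 1

/-- von Neumann entropy in base 2, defined via the eigenvalues of a Hermitian matrix
(with the convention `0 * logb 2 0 = 0`, automatic since `Real.logb 2 0 = 0`). -/
def vnEntropy {I : Type*} [Fintype I] [DecidableEq I] (ρ : Matrix I I ℂ) : ℝ :=
  if h : ρ.IsHermitian then -∑ i, h.eigenvalues i * Real.logb 2 (h.eigenvalues i) else 0

/-- Partial trace over the first tensor factor. -/
def ptraceA {A B : Type*} [Fintype A] (ρ : Matrix (A × B) (A × B) ℂ) : Matrix B B ℂ :=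
  Matrix.of fun b b' => ∑ a, ρ (a, b) (a, b')

/-- Partial trace over the second tensor factor. -/
def ptraceB {A B : Type*} [Fintype B] (ρ : Matrix (A × B) (A × B) ℂ) : Matrix A A ℂ :=
  Matrix.of fun a a' => ∑ b, ρ (a, b) (a', b)

/-- Conditional von Neumann entropy `H(A|B)_ρ = H(ρ) − H(Tr_A ρ)`. -/
def condEnt {A B : Type*} [Fintype A] [Fintype B] [DecidableEq A] [DecidableEq B]
    (ρ : Matrix (A × B) (A × B) ℂ) : ℝ :=
  vnEntropy ρ - vnEntropy (ptraceA ρ)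

/-- A POVM: a family of positive semidefinite matrices summing to the identity. -/
def IsPOVM {B T : Type*} [Fintype B] [Fintype T] [DecidableEq B]
    (E : T → Matrix B B ℂ) : Prop :=
  (∀ t, (E t).PosSemidef) ∧ ∑ t, E t = 1

/-- The binary entropy function, base 2. -/
def binH (x : ℝ) : ℝ := -(x * Real.logb 2 x) - (1 - x) * Real.logb 2 (1 - x)

/-- The rank-one projection `|s⟩⟨s|` onto a standard basis vector. -/
def proj {I : Type*} [DecidableEq I] (s : I) : Matrix I I ℂ := Matrix.single s s 1

/-- The rank-one projection `|v⟩⟨v|` onto a vector. -/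
def vecProj {I : Type*} (v : I → ℂ) : Matrix I I ℂ :=
  Matrix.of fun i j => v i * star (v j)

/-- The one-qubit Hadamard matrix `H = (1/√2)[[1,1],[1,−1]]`. -/
def Had : Matrix Bool Bool ℂ :=
  Matrix.of fun a b => (if a && b then -1 else 1) / (Real.sqrt 2 : ℂ)

/-- The n-qubit Hadamard `H^{⊗n}`, acting on bit strings. -/
def HadN (n : ℕ) : Matrix (Fin n → Bool) (Fin n → Bool) ℂ :=
  Matrix.of fun s t => ∏ j, Had (s j) (t j)

/-- The one-qubit unitary mapping the computational basis to the Pauli-Y eigenbasis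
`{(|0⟩ + i|1⟩)/√2, (|0⟩ − i|1⟩)/√2}`. -/
def KY : Matrix Bool Bool ℂ :=
  Matrix.of fun a b =>
    (if a then (if b then -Complex.I else Complex.I) else 1) / (Real.sqrt 2 : ℂ)

/-- `K^{⊗n}` on n qubits. -/
def KYN (n : ℕ) : Matrix (Fin n → Bool) (Fin n → Bool) ℂ :=
  Matrix.of fun s t => ∏ j, KY (s j) (t j)

/-- The measurement projectors on Alice's n qubits: `Π^Z_s = |s⟩⟨s|` (θ = false),
`Π^X_s = H^{⊗n}|s⟩⟨s|H^{⊗n}` (θ = true). -/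
def PiZX (n : ℕ) (θ : Bool) (s : Fin n → Bool) :
    Matrix (Fin n → Bool) (Fin n → Bool) ℂ :=
  if θ then HadN n * proj s * HadN n else proj s

/-- The state obtained by measuring the A register with projectors `P s` (identity on B). -/
def measureA {S A B : Type*} [Fintype S] [Fintype A] [Fintype B] [DecidableEq B]
    (P : S → Matrix A A ℂ) (ρ : Matrix (A × B) (A × B) ℂ) : Matrix (A × B) (A × B) ℂ :=
  ∑ s, (P s ⊗ₖ (1 : Matrix B B ℂ)) * ρ * (P s ⊗ₖ (1 : Matrix B B ℂ))

end

/-!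
Classicality on `C` makes `ρ` block diagonal up to reordering the indices, `ρ ≅ ⊕ᵢ ρᵢ` with
`ρᵢ` acting on `A ⊗ Q`, and then `Tr_A ρ ≅ ⊕ᵢ Tr_A ρᵢ`. Entropies of block diagonal matrices add
up, so `H(A|B)_ρ = ∑ᵢ (H(ρᵢ) − H(Tr_A ρᵢ))`. For a positive semidefinite `σ` of trace `p` on
`A ⊗ Q`, superadditivity of `−x log x` on `[0, ∞)` gives `H(σ) ≥ −p log₂ p`, while Jensen's
inequality for the concave `−x log x` gives `H(Tr_A σ) ≤ −p log₂ p + p log₂ |Q|`. So block `i`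
contributes at least `−pᵢ log₂ |Q|`, and the traces `pᵢ` sum to `1`.
-/

namespace Real

lemma negMulLog_sum_le_sum_negMulLog {ι : Type*} (s : Finset ι) {x : ι → ℝ}
    (hx : ∀ j ∈ s, 0 ≤ x j) : negMulLog (∑ j ∈ s, x j) ≤ ∑ j ∈ s, negMulLog (x j) := by
  rw [negMulLog, neg_mul, Finset.sum_mul, ← Finset.sum_neg_distrib]
  refine Finset.sum_le_sum fun j hj => ?_
  rcases (hx j hj).eq_or_lt with h | h
  · simp [← h]
  · rw [negMulLog, neg_mul, neg_le_neg_iff]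
    exact mul_le_mul_of_nonneg_left
      (log_le_log h (Finset.single_le_sum hx hj)) h.le

lemma sum_negMulLog_le {ι : Type*} [Fintype ι] [Nonempty ι] {x : ι → ℝ} (hx : ∀ j, 0 ≤ x j) :
    ∑ j, negMulLog (x j) ≤ negMulLog (∑ j, x j) + (∑ j, x j) * log (Fintype.card ι) := by
  set n : ℝ := (Fintype.card ι : ℝ)
  have hn : 0 < n := by positivity
  have jensen := concaveOn_negMulLog.le_map_sum (t := Finset.univ) (w := fun _ => n⁻¹)
    (p := x) (fun _ _ => by positivity) (by simp [Finset.card_univ, n])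
    (fun j _ => Set.mem_Ici.mpr (hx j))
  rw [← Finset.smul_sum, ← Finset.smul_sum, smul_eq_mul, smul_eq_mul, negMulLog_mul,
    negMulLog, log_inv] at jensen
  have := mul_le_mul_of_nonneg_left jensen hn.le
  field_simp at this
  linarith

end Real

namespace Matrix

open Polynomial

lemma charpoly_blockDiagonal {m o R : Type*} [Fintype m] [Fintype o] [DecidableEq m]
    [DecidableEq o] [CommRing R] (M : o → Matrix m m R) :
    (blockDiagonal M).charpoly = ∏ k, (M k).charpoly := by
  have : (blockDiagonal M).charmatrix = blockDiagonal fun k => (M k).charmatrix := by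
    ext ⟨i, k⟩ ⟨j, l⟩
    simp only [charmatrix_apply, blockDiagonal_apply, diagonal_apply, Prod.mk.injEq]
    split_ifs <;> simp_all
  rw [charpoly, this, det_blockDiagonal]
  rfl

lemma IsHermitian.sum_comp_eigenvalues {𝕜 n : Type*} [RCLike 𝕜] [Fintype n] [DecidableEq n]
    {A : Matrix n n 𝕜} (hA : A.IsHermitian) (g : ℝ → ℝ) :
    ∑ i, g (hA.eigenvalues i) = (A.charpoly.roots.map fun z => g (RCLike.re z)).sum := by
  rw [hA.roots_charpoly_eq_eigenvalues, Multiset.map_map, Finset.sum_eq_multiset_sum]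
  simp [Function.comp_def]

lemma IsHermitian.sum_comp_eigenvalues_submatrix_blockDiagonal {𝕜 I m o : Type*} [RCLike 𝕜]
    [Fintype I] [Fintype m] [Fintype o] [DecidableEq I] [DecidableEq m] [DecidableEq o]
    {B : o → Matrix m m 𝕜} (hB : ∀ k, (B k).IsHermitian) (e : I ≃ m × o)
    (h : ((blockDiagonal B).submatrix e e).IsHermitian) (g : ℝ → ℝ) :
    ∑ i, g (h.eigenvalues i) = ∑ k, ∑ p, g ((hB k).eigenvalues p) := by
  have hcharpoly : ((blockDiagonal B).submatrix e e).charpoly = ∏ k, (B k).charpoly := by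
    rw [← charpoly_blockDiagonal, ← charpoly_reindex e.symm]
    rfl
  rw [h.sum_comp_eigenvalues, hcharpoly, roots_prod _ _ (Finset.prod_ne_zero_iff.mpr
    fun k _ => (charpoly_monic (B k)).ne_zero), Multiset.map_bind, Multiset.sum_bind]
  simp only [(hB _).sum_comp_eigenvalues, Finset.sum_eq_multiset_sum]

end Matrix

section Entropy

variable {I : Type*} [Fintype I] [DecidableEq I] {ρ : Matrix I I ℂ}

lemma vnEntropy_eq_sum_negMulLog (h : ρ.IsHermitian) :
    vnEntropy ρ = (∑ i, Real.negMulLog (h.eigenvalues i)) / Real.log 2 := by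
  rw [vnEntropy, dif_pos h, Finset.sum_div, ← Finset.sum_neg_distrib]
  congr 1
  funext i
  rw [Real.negMulLog, Real.logb]
  ring

lemma Matrix.IsHermitian.re_trace_eq_sum_eigenvalues (h : ρ.IsHermitian) :
    ρ.trace.re = ∑ i, h.eigenvalues i := by
  simp [h.trace_eq_sum_eigenvalues]

lemma negMulLog_re_trace_div_le_vnEntropy (h : ρ.PosSemidef) :
    Real.negMulLog ρ.trace.re / Real.log 2 ≤ vnEntropy ρ := by
  rw [vnEntropy_eq_sum_negMulLog h.1, h.1.re_trace_eq_sum_eigenvalues]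
  gcongr
  exact Real.negMulLog_sum_le_sum_negMulLog _ fun i _ => h.eigenvalues_nonneg i

lemma vnEntropy_le_negMulLog_re_trace_div_add_mul_logb_card [Nonempty I] (h : ρ.PosSemidef) :
    vnEntropy ρ ≤
      Real.negMulLog ρ.trace.re / Real.log 2 + ρ.trace.re * Real.logb 2 (Fintype.card I) := by
  rw [vnEntropy_eq_sum_negMulLog h.1, h.1.re_trace_eq_sum_eigenvalues, Real.logb,
    mul_div_assoc', ← add_div]
  gcongr
  exact Real.sum_negMulLog_le h.eigenvalues_nonneg

variable {m o : Type*} [Fintype m] [Fintype o] [DecidableEq m] [DecidableEq o]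

lemma vnEntropy_submatrix_blockDiagonal {B : o → Matrix m m ℂ} (hB : ∀ k, (B k).IsHermitian)
    (e : I ≃ m × o) : vnEntropy ((blockDiagonal B).submatrix e e) = ∑ k, vnEntropy (B k) := by
  have h := (isHermitian_blockDiagonal_iff.mpr hB).submatrix e
  simp only [vnEntropy_eq_sum_negMulLog h, vnEntropy_eq_sum_negMulLog (hB _), ← Finset.sum_div,
    h.sum_comp_eigenvalues_submatrix_blockDiagonal hB]

end Entropy

section PartialTrace

variable {A B : Type*} [Fintype A] {ρ : Matrix (A × B) (A × B) ℂ}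

lemma ptraceA_eq_sum_submatrix (ρ : Matrix (A × B) (A × B) ℂ) :
    ptraceA ρ = ∑ a, ρ.submatrix (Prod.mk a) (Prod.mk a) := by
  ext b b'
  simp [ptraceA, Matrix.sum_apply]

lemma Matrix.IsHermitian.ptraceA (h : ρ.IsHermitian) : (ptraceA ρ).IsHermitian := by
  rw [ptraceA_eq_sum_submatrix]
  exact isSelfAdjoint_sum _ fun a _ => h.submatrix _

lemma Matrix.PosSemidef.ptraceA (h : ρ.PosSemidef) : (ptraceA ρ).PosSemidef := by
  rw [ptraceA_eq_sum_submatrix]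
  exact posSemidef_sum _ fun a _ => h.submatrix _

variable [Fintype B]

lemma trace_ptraceA (ρ : Matrix (A × B) (A × B) ℂ) : (ptraceA ρ).trace = ρ.trace := by
  simp [trace, ptraceA, Fintype.sum_prod_type, Finset.sum_comm (γ := A)]

lemma neg_re_trace_mul_logb_card_le_condEnt [DecidableEq A] [DecidableEq B] [Nonempty B]
    (h : ρ.PosSemidef) : -(ρ.trace.re * Real.logb 2 (Fintype.card B)) ≤ condEnt ρ := by
  have hjoint := negMulLog_re_trace_div_le_vnEntropy h
  have hmarginal := vnEntropy_le_negMulLog_re_trace_div_add_mul_logb_card h.ptraceA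
  rw [trace_ptraceA] at hmarginal
  rw [condEnt]
  linarith

end PartialTrace

section Classical

variable {A C Q : Type*}

def classicalBlock {α : Type*} (ρ : Matrix (A × (C × Q)) (A × (C × Q)) α) (i : C) :
    Matrix (A × Q) (A × Q) α :=
  ρ.submatrix (fun p => (p.1, (i, p.2))) (fun p => (p.1, (i, p.2)))

def classicalBlockEquiv : A × (C × Q) ≃ (A × Q) × C :=
  (Equiv.prodCongr (Equiv.refl A) (Equiv.prodComm C Q)).trans (Equiv.prodAssoc A Q C).symm

lemma trace_eq_sum_trace_classicalBlock [Fintype A] [Fintype C] [Fintype Q]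
    (ρ : Matrix (A × (C × Q)) (A × (C × Q)) ℂ) :
    ρ.trace = ∑ i, (classicalBlock ρ i).trace := by
  simp only [trace, Matrix.diag, classicalBlock, Fintype.sum_prod_type]
  exact Finset.sum_comm

variable [DecidableEq C] {ρ : Matrix (A × (C × Q)) (A × (C × Q)) ℂ}

lemma eq_submatrix_blockDiagonal_classicalBlock
    (hρ : ∀ (a a' : A) (i i' : C) (q q' : Q), i ≠ i' → ρ (a, (i, q)) (a', (i', q')) = 0) :
    ρ = (blockDiagonal (classicalBlock ρ)).submatrix classicalBlockEquiv classicalBlockEquiv := by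
  ext ⟨a, i, q⟩ ⟨a', i', q'⟩
  by_cases hi : i = i'
  · subst hi
    simp [classicalBlockEquiv, classicalBlock]
  · simp [classicalBlockEquiv, blockDiagonal_apply_ne _ _ _ hi, hρ a a' i i' q q' hi]

lemma ptraceA_eq_submatrix_blockDiagonal_classicalBlock [Fintype A]
    (hρ : ∀ (a a' : A) (i i' : C) (q q' : Q), i ≠ i' → ρ (a, (i, q)) (a', (i', q')) = 0) :
    ptraceA ρ = (blockDiagonal fun i => ptraceA (classicalBlock ρ i)).submatrix
      (Equiv.prodComm C Q) (Equiv.prodComm C Q) := by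
  ext ⟨i, q⟩ ⟨i', q'⟩
  by_cases hi : i = i'
  · subst hi
    simp [ptraceA, classicalBlock]
  · simp [ptraceA, blockDiagonal_apply_ne _ _ _ hi, hρ _ _ i i' q q' hi]

lemma condEnt_eq_sum_condEnt_classicalBlock [Fintype A] [Fintype C] [Fintype Q]
    [DecidableEq A] [DecidableEq Q] (hherm : ρ.IsHermitian)
    (hρ : ∀ (a a' : A) (i i' : C) (q q' : Q), i ≠ i' → ρ (a, (i, q)) (a', (i', q')) = 0) :
    condEnt ρ = ∑ i, condEnt (classicalBlock ρ i) := by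
  have hblock (i : C) : (classicalBlock ρ i).IsHermitian := hherm.submatrix _
  have hjoint : vnEntropy ρ = ∑ i, vnEntropy (classicalBlock ρ i) :=
    (congrArg vnEntropy (eq_submatrix_blockDiagonal_classicalBlock hρ)).trans
      (vnEntropy_submatrix_blockDiagonal hblock _)
  rw [condEnt, hjoint, ptraceA_eq_submatrix_blockDiagonal_classicalBlock hρ,
    vnEntropy_submatrix_blockDiagonal fun i => (hblock i).ptraceA, ← Finset.sum_sub_distrib]
  rfl

end Classical

theorem condEnt_ge_neg_logb_card_of_classical_general
    {A C Q : Type*} [Fintype A] [Fintype C] [Fintype Q]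
    [Nonempty Q]
    [DecidableEq A] [DecidableEq C] [DecidableEq Q]
    (ρ : Matrix (A × (C × Q)) (A × (C × Q)) ℂ) (hρ : IsDensityMatrix ρ)
    (hclassical : ∀ (a a' : A) (i i' : C) (q q' : Q),
      i ≠ i' → ρ (a, (i, q)) (a', (i', q')) = 0) :
    vnEntropy ρ - vnEntropy (ptraceA ρ) ≥ -Real.logb 2 (Fintype.card Q) := by
  have hblock (i : C) : (classicalBlock ρ i).PosSemidef := hρ.1.submatrix _
  have htrace : ∑ i, (classicalBlock ρ i).trace.re = 1 := by
    rw [← Complex.re_sum, ← trace_eq_sum_trace_classicalBlock, hρ.2, Complex.one_re]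
  calc -Real.logb 2 (Fintype.card Q)
      = ∑ i, -((classicalBlock ρ i).trace.re * Real.logb 2 (Fintype.card Q)) := by
        rw [Finset.sum_neg_distrib, ← Finset.sum_mul, htrace, one_mul]
    _ ≤ ∑ i, condEnt (classicalBlock ρ i) :=
        Finset.sum_le_sum fun i _ => neg_re_trace_mul_logb_card_le_condEnt (hblock i)
    _ = condEnt ρ := (condEnt_eq_sum_condEnt_classicalBlock hρ.1.1 hclassical).symm

/-- For a state that is classical on the register `C` of `B = C ⊗ Q`, the conditional
von Neumann entropy satisfies `H(A|B)_ρ ≥ −log₂ |Q|`. -/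
theorem condEnt_ge_neg_logb_card_of_classical
    {A C Q : Type*} [Fintype A] [Fintype C] [Fintype Q]
    [Nonempty A] [Nonempty C] [Nonempty Q]
    [DecidableEq A] [DecidableEq C] [DecidableEq Q]
    (ρ : Matrix (A × (C × Q)) (A × (C × Q)) ℂ) (hρ : IsDensityMatrix ρ)
    (hclassical : ∀ (a a' : A) (i i' : C) (q q' : Q),
      i ≠ i' → ρ (a, (i, q)) (a', (i', q')) = 0) :
    vnEntropy ρ - vnEntropy (ptraceA ρ) ≥ -Real.logb 2 (Fintype.card Q) :=
  condEnt_ge_neg_logb_card_of_classical_general ρ hρ hclassical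
end

section
/- (Fano-type inequality for approximate string recovery.) Let n ≥ 1 be an integer and α ∈ [0, 1/2). Let q be a joint probability distribution on {0,1}^n × {0,1}^n (random variables S and S'), let p = ∑_{(s,s') : d_H(s,s') ≤ αn} q(s,s') be the probability that S and S' agree on at least (1−α)n bits, and let M = ∑_{i=0}^{⌊αn⌋} C(n,i). Then the classical conditional Shannon entropy satisfies H(S|S')_q ≤ H(p) + p log₂ M + (1−p) log₂(2^n − M), where H(x) = −x log₂ x − (1−x) log₂(1−x) is the binary entropy function. -/
open Matrix Kronecker BigOperators Finset ComplexOrder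

/-! Gibbs' inequality bounds `H(S|S')` by `-∑ q log₂ F` for any kernel `F(s|s')` whose columns
sum to at most `1`. Take `F` uniform with total mass `p` on the Hamming ball of radius `αn`
around `s'` (which has `M` points) and uniform with mass `1 - p` on its complement; then
`-∑ q log₂ F` is exactly `H(p) + p log₂ M + (1 - p) log₂ (2ⁿ - M)`. -/

open Real

lemma mul_div_le_of_nonneg {K : Type*} [Field K] [Preorder K] {b : K} (a : K) (hb : 0 ≤ b) :
    a * (b / a) ≤ b := by
  rcases eq_or_ne a 0 with rfl | ha
  · simpa using hb
  · rw [mul_div_cancel₀ _ ha]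

lemma mul_logb_div_eq {x y c : ℝ} (hx : 0 ≤ x) (hxy : x ≤ y) (hc : 0 < x → c ≠ 0) :
    x * logb 2 (y / c) = x * (logb 2 y - logb 2 c) := by
  rcases hx.eq_or_lt with rfl | hx
  · simp
  · rw [logb_div (hx.trans_le hxy).ne' (hc hx)]

lemma mul_logb_le_mul_logb_div_add {x y r : ℝ} (hx : 0 ≤ x) (hxy : x ≤ y) (hr : 0 ≤ r)
    (hpos : 0 < x → 0 < r) :
    x * logb 2 r ≤ x * logb 2 (x / y) + (r * y - x) / log 2 := by
  rcases hx.eq_or_lt with rfl | hx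
  · have : 0 ≤ y := hxy
    simp only [zero_mul, zero_div, sub_zero, zero_add]
    positivity
  · have hy : 0 < y := hx.trans_le hxy
    have hr := hpos hx
    have hlog : x * log (r * y / x) ≤ r * y - x := by
      have := log_le_sub_one_of_pos (show 0 < r * y / x by positivity)
      calc x * log (r * y / x) ≤ x * (r * y / x - 1) := by gcongr
        _ = r * y - x := by field_simp
    have hsplit : x * logb 2 r = x * logb 2 (x / y) + x * log (r * y / x) / log 2 := by
      rw [logb, logb, log_div (by positivity) hx.ne', log_mul hr.ne' hy.ne', log_div hx.ne' hy.ne']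
      ring
    rw [hsplit]
    gcongr

section Fano

variable {S T : Type*} [Fintype S] {r : S → T → Prop} [DecidableRel r]

-- If `M = 0` or `M = card S`, one class is empty and `x / 0 = 0` keeps the column sums `≤ 1`.
variable (r) in
noncomputable def fanoKernel (p : ℝ) (M : ℕ) (s : S) (t : T) : ℝ :=
  if r s t then p / M else (1 - p) / (Fintype.card S - M)

lemma sum_fanoKernel_le_one [DecidableEq S] {p : ℝ} {M : ℕ} (hM : ∀ t, #{s | r s t} = M)
    (hp0 : 0 ≤ p) (hp1 : p ≤ 1) (t : T) : ∑ s, fanoKernel r p M s t ≤ 1 := by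
  have hMN : M ≤ Fintype.card S := hM t ▸ card_le_univ _
  simp only [fanoKernel]
  rw [sum_ite, sum_const, sum_const, filter_not, card_sdiff_of_subset (filter_subset _ _),
    card_univ, hM t, nsmul_eq_mul, nsmul_eq_mul, Nat.cast_sub hMN]
  linarith [mul_div_le_of_nonneg (M : ℝ) hp0,
    mul_div_le_of_nonneg ((Fintype.card S : ℝ) - M) (sub_nonneg.mpr hp1)]

variable [Fintype T] {q : S → T → ℝ}

variable (q) in
noncomputable def classicalCondEntropy : ℝ :=
  -∑ s, ∑ t, q s t * logb 2 (q s t / ∑ s₀, q s₀ t)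

theorem classicalCondEntropy_le_of_sum_le_one {F : S → T → ℝ} (hq0 : ∀ s t, 0 ≤ q s t)
    (hF0 : ∀ s t, 0 ≤ F s t) (hFpos : ∀ s t, 0 < q s t → 0 < F s t)
    (hF1 : ∀ t, ∑ s, F s t ≤ 1) :
    classicalCondEntropy q ≤ -∑ s, ∑ t, q s t * logb 2 (F s t) := by
  set Q : T → ℝ := fun t => ∑ s₀, q s₀ t
  have hterm : ∀ s t, q s t * logb 2 (F s t) ≤
      q s t * logb 2 (q s t / Q t) + (F s t * Q t - q s t) / log 2 := fun s t =>
    mul_logb_le_mul_logb_div_add (hq0 s t)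
      (single_le_sum (fun s₀ _ => hq0 s₀ t) (mem_univ s)) (hF0 s t) (hFpos s t)
  have hmass : ∑ s, ∑ t, F s t * Q t ≤ ∑ s, ∑ t, q s t := by
    rw [sum_comm, sum_comm (f := q)]
    refine sum_le_sum fun t _ => ?_
    rw [← sum_mul]
    exact mul_le_of_le_one_left (sum_nonneg fun s _ => hq0 s t) (hF1 t)
  have hslack : ∑ s, ∑ t, (F s t * Q t - q s t) / log 2 ≤ 0 := by
    simp only [← sum_div, sum_sub_distrib]
    exact div_nonpos_of_nonpos_of_nonneg (by linarith) (log_nonneg one_le_two)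
  have := sum_le_sum fun s (_ : s ∈ univ) => sum_le_sum fun t (_ : t ∈ univ) => hterm s t
  simp only [sum_add_distrib] at this
  rw [classicalCondEntropy]
  linarith

variable (r q) in
def relMass : ℝ := ∑ s, ∑ t, if r s t then q s t else 0

lemma relMass_nonneg (hq0 : ∀ s t, 0 ≤ q s t) : 0 ≤ relMass r q :=
  sum_nonneg fun s _ => sum_nonneg fun t _ => ite_nonneg (hq0 s t) le_rfl

lemma le_relMass (hq0 : ∀ s t, 0 ≤ q s t) {s : S} {t : T} (h : r s t) :
    q s t ≤ relMass r q := by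
  have hg : ∀ s t, 0 ≤ if r s t then q s t else 0 := fun s t => ite_nonneg (hq0 s t) le_rfl
  calc q s t = if r s t then q s t else 0 := (if_pos h).symm
    _ ≤ ∑ t, if r s t then q s t else 0 := single_le_sum (fun t _ => hg s t) (mem_univ t)
    _ ≤ relMass r q := single_le_sum (fun s _ => sum_nonneg fun t _ => hg s t) (mem_univ s)

lemma relMass_not (hq1 : ∑ s, ∑ t, q s t = 1) :
    relMass (fun s t => ¬ r s t) q = 1 - relMass r q := by
  rw [← hq1, relMass, relMass, ← sum_sub_distrib]
  refine sum_congr rfl fun s _ => ?_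
  rw [← sum_sub_distrib]
  exact sum_congr rfl fun t _ => by split_ifs <;> simp

theorem classicalCondEntropy_le_fano [DecidableEq S] (hq0 : ∀ s t, 0 ≤ q s t)
    (hq1 : ∑ s, ∑ t, q s t = 1) {M : ℕ} (hM : ∀ t, #{s | r s t} = M) :
    classicalCondEntropy q ≤ binH (relMass r q) + relMass r q * logb 2 M +
      (1 - relMass r q) * logb 2 (Fintype.card S - M) := by
  set p := relMass r q
  have hfar : relMass (fun s t => ¬ r s t) q = 1 - p := relMass_not hq1
  have hp0 : 0 ≤ p := relMass_nonneg hq0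
  have h1p : 0 ≤ 1 - p := hfar ▸ relMass_nonneg hq0
  have hM_pos : ∀ {s t}, r s t → (0 : ℝ) < M := fun {s t} h => by
    rw [← hM t]; exact_mod_cast card_pos.mpr ⟨s, by simpa using h⟩
  have hM_lt : ∀ {s t}, ¬ r s t → (M : ℝ) < Fintype.card S := fun {s t} h => by
    rw [← hM t]; exact_mod_cast card_lt_univ_of_notMem (x := s) (by simpa using h)
  have hq_close : ∀ {s t}, r s t → q s t ≤ p := le_relMass hq0
  have hq_far : ∀ {s t}, ¬ r s t → q s t ≤ 1 - p := fun h =>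
    hfar ▸ le_relMass (r := fun s t => ¬ r s t) hq0 h
  have hF0 (s t) : 0 ≤ fanoKernel r p M s t := by
    unfold fanoKernel
    split_ifs with h
    · exact div_nonneg hp0 M.cast_nonneg
    · exact div_nonneg h1p (sub_nonneg.mpr (hM_lt h).le)
  have hFpos (s t) (hq : 0 < q s t) : 0 < fanoKernel r p M s t := by
    unfold fanoKernel
    split_ifs with h
    · exact div_pos (hq.trans_le (hq_close h)) (hM_pos h)
    · exact div_pos (hq.trans_le (hq_far h)) (sub_pos.mpr (hM_lt h))
  have hterm (s t) : q s t * logb 2 (fanoKernel r p M s t) =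
      (if r s t then q s t else 0) * (logb 2 p - logb 2 M) +
        (if ¬ r s t then q s t else 0) * (logb 2 (1 - p) - logb 2 (Fintype.card S - M)) := by
    unfold fanoKernel
    split_ifs with h
    · simpa using mul_logb_div_eq (hq0 s t) (hq_close h) fun _ => (hM_pos h).ne'
    · simpa using mul_logb_div_eq (hq0 s t) (hq_far h) fun _ => (sub_pos.mpr (hM_lt h)).ne'
  calc classicalCondEntropy q ≤ -∑ s, ∑ t, q s t * logb 2 (fanoKernel r p M s t) :=
        classicalCondEntropy_le_of_sum_le_one hq0 hF0 hFpos
          (sum_fanoKernel_le_one hM hp0 (by linarith))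
    _ = -(p * (logb 2 p - logb 2 M) +
          (1 - p) * (logb 2 (1 - p) - logb 2 (Fintype.card S - M))) := by
        simp only [hterm, sum_add_distrib, ← sum_mul]
        rw [← hfar]
        rfl
    _ = _ := by unfold binH; ring

end Fano

section Hamming

variable {ι : Type*} [Fintype ι] [DecidableEq ι]

def diffPositionsEquiv (x : ι → Bool) : (ι → Bool) ≃ Finset ι where
  toFun y := {i | y i ≠ x i}
  invFun A i := if i ∈ A then !x i else x i
  left_inv y := by
    funext i
    by_cases h : y i = x i
    · simp [h]
    · simpa [h] using (Bool.not_eq.mpr h).symm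
  right_inv A := by ext i; by_cases h : i ∈ A <;> simp [h]

lemma card_filter_hammingDist_eq (x : ι → Bool) (i : ℕ) :
    #{y | hammingDist y x = i} = (Fintype.card ι).choose i := by
  rw [← card_univ, ← card_powersetCard, powersetCard_eq_filter, powerset_univ]
  exact card_equiv (diffPositionsEquiv x) fun y => by simp [hammingDist, diffPositionsEquiv]

lemma card_filter_hammingDist_le (x : ι → Bool) (k : ℕ) :
    #{y | hammingDist y x ≤ k} = ∑ i ∈ range (k + 1), (Fintype.card ι).choose i := by
  rw [card_eq_sum_card_fiberwise (f := (hammingDist · x)) (t := range (k + 1))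
    fun y hy => by simpa [Nat.lt_succ_iff] using hy]
  refine sum_congr rfl fun i hi => ?_
  rw [← card_filter_hammingDist_eq x i, filter_filter]
  congr 1
  exact filter_congr fun y _ =>
    and_iff_right_of_imp fun h => h ▸ Nat.lt_succ_iff.mp (mem_range.mp hi)

end Hamming

theorem fano_type_inequality_general
    (n : ℕ) (α : ℝ) (hα : α ∈ Set.Ico (0 : ℝ) (1 / 2))
    (q : (Fin n → Bool) → (Fin n → Bool) → ℝ)
    (hq0 : ∀ s s', 0 ≤ q s s') (hq1 : ∑ s, ∑ s', q s s' = 1)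
    (p : ℝ)
    (hp : p = ∑ s, ∑ s', if (hammingDist s s' : ℝ) ≤ α * n then q s s' else 0)
    (M : ℕ) (hM : M = ∑ i ∈ Finset.range (⌊α * n⌋₊ + 1), n.choose i) :
    -∑ s, ∑ s', q s s' * Real.logb 2 (q s s' / (∑ t, q t s')) ≤
      binH p + p * Real.logb 2 M + (1 - p) * Real.logb 2 ((2 : ℝ) ^ n - M) := by
  have hclose (s s' : Fin n → Bool) :
      (hammingDist s s' : ℝ) ≤ α * n ↔ hammingDist s s' ≤ ⌊α * n⌋₊ :=
    (Nat.le_floor_iff (by have := hα.1; positivity)).symm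
  have hp' : p = relMass (fun s s' => hammingDist s s' ≤ ⌊α * n⌋₊) q := by
    simp only [hp, relMass, hclose]
  have hball (s' : Fin n → Bool) : #{s | hammingDist s s' ≤ ⌊α * n⌋₊} = M := by
    rw [card_filter_hammingDist_le, Fintype.card_fin, hM]
  have key := classicalCondEntropy_le_fano hq0 hq1 hball
  simp only [Fintype.card_fun, Fintype.card_bool, Fintype.card_fin, Nat.cast_pow, Nat.cast_ofNat,
    ← hp'] at key
  exact key

/-- **Fano-type inequality for approximate string recovery.**  If `p` is the probability
that `S` and `S'` agree on at least `(1−α)n` bits, then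
`H(S|S')_q ≤ H(p) + p·log₂ M + (1−p)·log₂(2ⁿ − M)` where `M = ∑_{i=0}^{⌊αn⌋} C(n,i)`. -/
theorem fano_type_inequality
    (n : ℕ) (hn : 1 ≤ n) (α : ℝ) (hα : α ∈ Set.Ico (0 : ℝ) (1 / 2))
    (q : (Fin n → Bool) → (Fin n → Bool) → ℝ)
    (hq0 : ∀ s s', 0 ≤ q s s') (hq1 : ∑ s, ∑ s', q s s' = 1)
    (p : ℝ)
    (hp : p = ∑ s, ∑ s', if (hammingDist s s' : ℝ) ≤ α * n then q s s' else 0)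
    (M : ℕ) (hM : M = ∑ i ∈ Finset.range (⌊α * n⌋₊ + 1), n.choose i) :
    -∑ s, ∑ s', q s s' * Real.logb 2 (q s s' / (∑ t, q t s')) ≤
      binH p + p * Real.logb 2 M + (1 - p) * Real.logb 2 ((2 : ℝ) ^ n - M) :=
  fano_type_inequality_general n α hα q hq0 hq1 p hp M hM
end

section
/- For every integer n ≥ 1 and every α ∈ (0, 1/2] such that αn is an integer, the central-type binomial coefficient satisfies C(n, αn) ≥ 2^{n·H(α)} / √(8 n α (1−α)), where H(α) = −α log₂ α − (1−α) log₂(1−α) is the binary entropy function. -/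
open Matrix Kronecker BigOperators Finset ComplexOrder

/-! With `n = k + m` and Stirling's sequence `s j = j! / (√(2j) (j/e)^j)`, the factors `e^j`
cancel in `C(n, k) = n! / (k! m!)`, leaving
`C(n, k) · s k · s m = s n · √(n / (2km)) · n^n / (k^k m^m)`, and `n^n / (k^k m^m)` is exactly
`2^{n H(k/n)}`. The sequence `s` decreases to `√π`, so `s n ≥ √π`, while `s k · s m ≤ 2√π`
as soon as `n ≥ 4`: the worst cases are `s 1 · s 3` and `s 2 · s 2`, both reducing to
`e^8 ≤ 972π`. The cases `n ≤ 3` are checked directly. -/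

open Real Stirling Nat

lemma exp_one_pow_eight_le : exp 1 ^ 8 ≤ 972 * π := by
  calc exp 1 ^ 8 ≤ 2.7182818286 ^ 8 := by gcongr; exact exp_one_lt_d9.le
    _ ≤ 972 * 3.14 := by norm_num
    _ ≤ 972 * π := by linarith [pi_gt_d2]

namespace Stirling

lemma stirlingSeq_nonneg (n : ℕ) : 0 ≤ stirlingSeq n := by
  unfold stirlingSeq; positivity

lemma stirlingSeq_le_of_le {a b : ℕ} (ha : a ≠ 0) (hab : a ≤ b) :
    stirlingSeq b ≤ stirlingSeq a := by
  obtain ⟨a, rfl⟩ := Nat.exists_eq_succ_of_ne_zero ha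
  obtain ⟨b, rfl⟩ : ∃ b', b = b' + 1 := ⟨b - 1, by omega⟩
  exact stirlingSeq'_antitone (by omega : a ≤ b)

lemma factorial_mul_exp_pow {n : ℕ} (hn : n ≠ 0) :
    (n ! : ℝ) * exp 1 ^ n = stirlingSeq n * √(2 * n) * (n : ℝ) ^ n := by
  have : (0 : ℝ) < n := by positivity
  rw [stirlingSeq, div_pow, div_mul_eq_mul_div, div_mul_eq_mul_div, eq_div_iff (by positivity)]
  field_simp

lemma stirlingSeq_one_mul_stirlingSeq_three_sq :
    (stirlingSeq 1 * stirlingSeq 3) ^ 2 = exp 1 ^ 8 / 243 := by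
  simp only [stirlingSeq, mul_pow, div_pow, Nat.cast_ofNat]
  rw [sq_sqrt (by norm_num), sq_sqrt (by norm_num)]
  have he : exp 1 ≠ 0 := (exp_pos 1).ne'
  simp only [Nat.factorial, Nat.succ_eq_add_one]
  field_simp
  norm_num

lemma stirlingSeq_two_sq : stirlingSeq 2 ^ 2 = exp 1 ^ 4 / 16 := by
  simp only [stirlingSeq, mul_pow, div_pow, Nat.cast_ofNat]
  rw [sq_sqrt (by norm_num)]
  have he : exp 1 ≠ 0 := (exp_pos 1).ne'
  simp only [Nat.factorial, Nat.succ_eq_add_one]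
  field_simp
  norm_num

lemma stirlingSeq_mul_stirlingSeq_sq_le {k m : ℕ} (hk : k ≠ 0) (hm : m ≠ 0) (hkm : 4 ≤ k + m) :
    (stirlingSeq k * stirlingSeq m) ^ 2 ≤ 4 * π := by
  wlog hle : k ≤ m generalizing k m
  · rw [mul_comm]; exact this hm hk (by omega) (by omega)
  have := stirlingSeq_nonneg k
  have := stirlingSeq_nonneg m
  obtain rfl | hk2 : k = 1 ∨ 2 ≤ k := by omega
  · calc (stirlingSeq 1 * stirlingSeq m) ^ 2 ≤ (stirlingSeq 1 * stirlingSeq 3) ^ 2 := by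
          gcongr; exact stirlingSeq_le_of_le three_ne_zero (by omega)
      _ ≤ 4 * π := by
          rw [stirlingSeq_one_mul_stirlingSeq_three_sq]; linarith [exp_one_pow_eight_le]
  · calc (stirlingSeq k * stirlingSeq m) ^ 2 ≤ (stirlingSeq 2 * stirlingSeq 2) ^ 2 := by
          gcongr
          · exact stirlingSeq_nonneg 2
          · exact stirlingSeq_le_of_le two_ne_zero hk2
          · exact stirlingSeq_le_of_le two_ne_zero (by omega)
      _ ≤ 4 * π := by
          rw [← sq, ← pow_mul, pow_mul' _ 2 2, stirlingSeq_two_sq]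
          nlinarith [exp_one_pow_eight_le, pi_pos]

end Stirling

lemma pow_sq_mul_le_choose_sq {k m : ℕ} (hk : k ≠ 0) (hm : m ≠ 0) :
    (((k : ℝ) + m) ^ (k + m)) ^ 2 * ((k : ℝ) + m) ≤
      ((k + m).choose k : ℝ) ^ 2 * (8 * k * m) * ((k : ℝ) ^ k * (m : ℝ) ^ m) ^ 2 := by
  by_cases hkm : k + m ≤ 3
  · obtain ⟨rfl, rfl⟩ | ⟨rfl, rfl⟩ | ⟨rfl, rfl⟩ :
        (k = 1 ∧ m = 1) ∨ (k = 1 ∧ m = 2) ∨ (k = 2 ∧ m = 1) := by omega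
    all_goals norm_num [Nat.choose]
  have hn : k + m ≠ 0 := by omega
  have hfac : ((k + m).choose k : ℝ) * k ! * m ! = (k + m)! := by
    exact_mod_cast Nat.add_sub_cancel_left k m ▸
      Nat.choose_mul_factorial_mul_factorial (Nat.le_add_right k m)
  have hstir := congrArg (· ^ 2) <| calc
    ((k + m).choose k : ℝ) * (k ! * exp 1 ^ k) * (m ! * exp 1 ^ m)
        = (k + m)! * exp 1 ^ (k + m) := by rw [← hfac, pow_add]; ring
    _ = stirlingSeq (k + m) * √(2 * (k + m : ℕ)) * ((k + m : ℕ) : ℝ) ^ (k + m) :=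
        factorial_mul_exp_pow hn
  simp only [factorial_mul_exp_pow hk, factorial_mul_exp_pow hm, mul_pow, Nat.cast_add] at hstir
  rw [sq_sqrt (by positivity), sq_sqrt (by positivity), sq_sqrt (by positivity)] at hstir
  have hlow := pow_le_pow_left₀ (sqrt_nonneg π) (sqrt_pi_le_stirlingSeq hn) 2
  rw [sq_sqrt pi_pos.le] at hlow
  have hup := stirlingSeq_mul_stirlingSeq_sq_le hk hm (by omega)
  refine le_of_mul_le_mul_left ?_ two_pi_pos
  calc 2 * π * ((((k : ℝ) + m) ^ (k + m)) ^ 2 * ((k : ℝ) + m))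
      = π * (2 * ((k : ℝ) + m)) * (((k : ℝ) + m) ^ (k + m)) ^ 2 := by ring
    _ ≤ stirlingSeq (k + m) ^ 2 * (2 * ((k : ℝ) + m)) * (((k : ℝ) + m) ^ (k + m)) ^ 2 := by
        gcongr
    _ = 4 * ((k + m).choose k : ℝ) ^ 2 * (k * m) * ((k : ℝ) ^ k * (m : ℝ) ^ m) ^ 2
          * (stirlingSeq k * stirlingSeq m) ^ 2 := by rw [← hstir]; ring
    _ ≤ 4 * ((k + m).choose k : ℝ) ^ 2 * (k * m) * ((k : ℝ) ^ k * (m : ℝ) ^ m) ^ 2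
          * (4 * π) := by gcongr
    _ = _ := by ring

lemma pow_div_le_choose_mul_sqrt {k m : ℕ} (hk : k ≠ 0) (hm : m ≠ 0) :
    ((k : ℝ) + m) ^ (k + m) / ((k : ℝ) ^ k * (m : ℝ) ^ m) ≤
      (k + m).choose k * √(8 * k * m / ((k : ℝ) + m)) := by
  rw [← sqrt_sq (Nat.cast_nonneg _ : (0 : ℝ) ≤ (k + m).choose k), ← sqrt_mul (sq_nonneg _)]
  apply le_sqrt_of_sq_le
  rw [div_pow, div_le_iff₀ (by positivity), mul_div_assoc', div_mul_eq_mul_div,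
    le_div_iff₀ (by positivity)]
  exact pow_sq_mul_le_choose_sq hk hm

lemma two_rpow_mul_binH {a b : ℝ} (ha : 0 < a) (hb : 0 < b) :
    (2 : ℝ) ^ ((a + b) * binH (a / (a + b))) = (a + b) ^ (a + b) / (a ^ a * b ^ b) := by
  have hab : 0 < a + b := by positivity
  rw [rpow_def_of_pos two_pos, rpow_def_of_pos hab, rpow_def_of_pos ha, rpow_def_of_pos hb,
    ← exp_add, ← exp_sub]
  congr 1
  have h1 : 1 - a / (a + b) = b / (a + b) := by field_simp; ring
  rw [binH, h1, logb, logb, log_div ha.ne' hab.ne', log_div hb.ne' hab.ne']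
  field_simp
  ring

/-- Binomial coefficient lower bound via Stirling: for `αn` an integer with `0 < α ≤ 1/2`,
`C(n, αn) ≥ 2^{n·H(α)} / √(8·n·α·(1−α))`. -/
theorem binomial_ge_two_pow_entropy_div_sqrt
    (n : ℕ) (hn : 1 ≤ n) (α : ℝ) (hα : α ∈ Set.Ioc (0 : ℝ) (1 / 2))
    (k : ℕ) (hk : (k : ℝ) = α * n) :
    (n.choose k : ℝ) ≥
      (2 : ℝ) ^ ((n : ℝ) * binH α) / Real.sqrt (8 * n * α * (1 - α)) := by
  obtain ⟨hα0, hα2⟩ := hα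
  have hk0 : k ≠ 0 := by
    have : (0 : ℝ) < k := by rw [hk]; positivity
    exact_mod_cast this.ne'
  have h2k : 2 * k ≤ n := by
    have : (2 * k : ℝ) ≤ n := by rw [hk]; nlinarith
    exact_mod_cast this
  obtain ⟨m, rfl⟩ : ∃ m, n = k + m := ⟨n - k, by omega⟩
  have hm0 : m ≠ 0 := by omega
  push_cast at hk ⊢
  have hkm : (0 : ℝ) < k + m := by positivity
  obtain rfl : α = k / (k + m) := by rw [eq_div_iff hkm.ne']; exact hk.symm
  have hdenom : 8 * ((k : ℝ) + m) * (k / (k + m)) * (1 - k / (k + m)) = 8 * k * m / (k + m) := by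
    field_simp; ring
  rw [two_rpow_mul_binH (by positivity) (by positivity), hdenom, ge_iff_le,
    div_le_iff₀ (sqrt_pos.2 (by positivity)), ← Nat.cast_add, rpow_natCast, rpow_natCast,
    rpow_natCast, Nat.cast_add]
  exact pow_div_le_choose_mul_sqrt hk0 hm0
end
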